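/- arXiv:2505.07778 — 6 statements merged into one kernel-verified Lean document; each statement's English description precedes it below -/
import Mathlib

section
/- Let G be the graph on {0,1}^5 where distinct u, v are adjacent iff 1 ≤ d_H(u,v) ≤ 2. Then the independence number of G equals 4. -/
open SimpleGraph

def gilbert : SimpleGraph (Fin 5 → Bool) where
  Adj u v := 1 ≤ hammingDist u v ∧ hammingDist u v ≤ 2
  symm := ⟨fun u v h => ⟨hammingDist_comm v u ▸ h.1, hammingDist_comm v u ▸ h.2⟩⟩
  loopless := ⟨fun u h => by simpa [hammingDist_self] using h.1⟩

instance : DecidableRel gilbert.Adj :=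
  fun u v => inferInstanceAs (Decidable (1 ≤ hammingDist u v ∧ hammingDist u v ≤ 2))
/-- A set of vertices is independent if no two of its elements are adjacent. -/
def IsIndep {V : Type*} (G : SimpleGraph V) (s : Set V) : Prop :=
  s.Pairwise fun u v => ¬ G.Adj u v

/-- The independence number: the largest size of an independent set. -/
noncomputable def indepNum {V : Type*} [Fintype V] (G : SimpleGraph V) : ℕ :=
  sSup {n | ∃ s : Finset V, IsIndep G ↑s ∧ s.card = n}

/-!
An independent set of `gilbert` is a binary code of length 5 with minimum distance at least 3.
Among three binary words, each coordinate contributes at most 2 to the sum of the three pairwise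
distances, and nothing where all three agree. So three words that agree in one coordinate have
pairwise distances summing to at most `2 * 4 < 9`, and cannot be pairwise at distance `≥ 3`.
Splitting a code by its last coordinate, each half has at most two words, so the code has at most
four; the four words `00000, 11100, 00111, 11011` attain this.
-/

open Finset

section HammingBool

variable {ι : Type*} [Fintype ι] [DecidableEq ι]

theorem hammingDist_add_hammingDist_add_hammingDist_le (x y z : ι → Bool) {i₀ : ι}
    (hxy : x i₀ = y i₀) (hzy : z i₀ = y i₀) :
    hammingDist x y + hammingDist y z + hammingDist x z ≤ 2 * (Fintype.card ι - 1) := by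
  set f : ι → ℕ := fun i =>
    (if x i ≠ y i then 1 else 0) + (if y i ≠ z i then 1 else 0) + (if x i ≠ z i then 1 else 0)
  have hsum : hammingDist x y + hammingDist y z + hammingDist x z = ∑ i, f i := by
    simp only [f, hammingDist, card_filter, ← sum_add_distrib]
  have hf : ∀ i, f i ≤ 2 := fun i => by
    simp only [f]
    cases x i <;> cases y i <;> cases z i <;> decide
  have hf₀ : f i₀ = 0 := by simp [f, hxy, hzy]
  rw [hsum, ← add_sum_erase _ _ (mem_univ i₀), hf₀, zero_add]
  calc ∑ i ∈ univ.erase i₀, f i ≤ (univ.erase i₀).card • 2 :=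
        sum_le_card_nsmul _ _ _ fun i _ => hf i
    _ = 2 * (Fintype.card ι - 1) := by
        rw [card_erase_of_mem (mem_univ i₀), card_univ, smul_eq_mul, mul_comm]

theorem card_le_four_of_three_le_hammingDist (hι : Fintype.card ι ≤ 5) (i₀ : ι)
    (s : Finset (ι → Bool)) (hs : ∀ x ∈ s, ∀ y ∈ s, x ≠ y → 3 ≤ hammingDist x y) :
    s.card ≤ 4 := by
  have hfiber : ∀ b ∈ (univ : Finset Bool), {v ∈ s | v i₀ = b}.card ≤ 2 := by
    intro b _
    by_contra! h
    obtain ⟨x, hx, y, hy, z, hz, hxy, hxz, hyz⟩ := two_lt_card.1 h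
    simp only [mem_filter] at hx hy hz
    have hsum := hammingDist_add_hammingDist_add_hammingDist_le x y z
      (hx.2.trans hy.2.symm) (hz.2.trans hy.2.symm)
    have := hs x hx.1 y hy.1 hxy
    have := hs y hy.1 z hz.1 hyz
    have := hs x hx.1 z hz.1 hxz
    omega
  simpa using card_le_mul_card_image_of_maps_to (fun v _ => mem_univ (v i₀)) 2 hfiber

end HammingBool

theorem indepNum_eq_of_forall_card_le {V : Type*} [Fintype V] {G : SimpleGraph V} {n : ℕ}
    (hle : ∀ s : Finset V, IsIndep G ↑s → s.card ≤ n)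
    (hex : ∃ s : Finset V, IsIndep G ↑s ∧ s.card = n) :
    _root_.indepNum G = n := by
  have hbdd : BddAbove {n | ∃ s : Finset V, IsIndep G ↑s ∧ s.card = n} := by
    refine ⟨n, ?_⟩
    rintro _ ⟨s, hs, rfl⟩
    exact hle s hs
  refine le_antisymm (csSup_le ⟨n, hex⟩ ?_) (le_csSup hbdd hex)
  rintro _ ⟨s, hs, rfl⟩
  exact hle s hs

theorem three_le_hammingDist_of_not_adj_gilbert {x y : Fin 5 → Bool} (hne : x ≠ y)
    (h : ¬ gilbert.Adj x y) : 3 ≤ hammingDist x y := by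
  have := hammingDist_pos.2 hne
  simp only [gilbert, not_and, not_le] at h
  omega

def gilbertIndepFour : Finset (Fin 5 → Bool) :=
  {![false, false, false, false, false], ![true, true, true, false, false],
   ![false, false, true, true, true], ![true, true, false, true, true]}

theorem isIndep_gilbertIndepFour : IsIndep gilbert ↑gilbertIndepFour := by
  simp only [IsIndep, Set.Pairwise, mem_coe]
  decide

theorem stmt2 : _root_.indepNum gilbert = 4 := by
  refine indepNum_eq_of_forall_card_le (fun s hs => ?_) ⟨_, isIndep_gilbertIndepFour, rfl⟩
  refine card_le_four_of_three_le_hammingDist (by simp) 4 s fun x hx y hy hxy => ?_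
  exact three_le_hammingDist_of_not_adj_gilbert hxy (hs (mem_coe.2 hx) (mem_coe.2 hy) hxy)
end

section
/- Let G be the graph on {0,1}^5 where distinct u, v are adjacent iff 1 ≤ d_H(u,v) ≤ 2. Then any independent set of G has size at most 4. -/
open SimpleGraph

/-!
Three binary words `u, v, w` disagree pairwise in exactly two or zero of the three pairs at each
coordinate, so `d(u,v) + d(v,w) + d(u,w)` is even and at most twice the length. By the parity
part, `d(u,v) ≡ d(u,z) + d(v,z) (mod 2)` for a fixed word `z`, so among five codewords three have
`d(·,z)` of the same parity and hence pairwise even distances, i.e. distances at least `4`. Their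
distance sum is then at least `12 > 2 · 5`.
-/

section TripleHammingDist

open Finset

variable {ι : Type*} [Fintype ι] (u v w : ι → Bool)

theorem hammingDist_add_hammingDist_add_hammingDist :
    hammingDist u v + hammingDist v w + hammingDist u w
      = 2 * #{i | ¬(u i = v i ∧ v i = w i)} := by
  simp only [hammingDist, card_filter, ← sum_add_distrib, mul_sum]
  refine sum_congr rfl fun i _ => ?_
  cases u i <;> cases v i <;> cases w i <;> rfl

theorem even_hammingDist_add_hammingDist_add_hammingDist :
    Even (hammingDist u v + hammingDist v w + hammingDist u w) := by
  rw [hammingDist_add_hammingDist_add_hammingDist]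
  exact even_two_mul _

theorem hammingDist_add_hammingDist_add_hammingDist_le_s3 :
    hammingDist u v + hammingDist v w + hammingDist u w ≤ 2 * Fintype.card ι := by
  rw [hammingDist_add_hammingDist_add_hammingDist]
  gcongr
  exact card_le_univ _

theorem even_hammingDist_of_mod_two_eq {u v : ι → Bool} (z : ι → Bool)
    (h : hammingDist u z % 2 = hammingDist v z % 2) : Even (hammingDist u v) := by
  have htriple := even_hammingDist_add_hammingDist_add_hammingDist u v z
  rw [Nat.even_iff] at htriple ⊢
  omega

end TripleHammingDist

theorem three_le_hammingDist_of_isIndep {s : Set (Fin 5 → Bool)} (hs : IsIndep gilbert s)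
    {u v : Fin 5 → Bool} (hu : u ∈ s) (hv : v ∈ s) (huv : u ≠ v) : 3 ≤ hammingDist u v := by
  have hpos : 0 < hammingDist u v := hammingDist_pos.2 huv
  by_contra! hlt
  exact hs hu hv huv ⟨hpos, by omega⟩

theorem stmt3 (s : Finset (Fin 5 → Bool)) (hs : IsIndep gilbert ↑s) : s.card ≤ 4 := by
  by_contra! hcard
  let z : Fin 5 → Bool := fun _ => false
  obtain ⟨p, -, hp⟩ := Finset.exists_lt_card_fiber_of_mul_lt_card_of_maps_to
    (f := fun u => hammingDist u z % 2) (t := Finset.range 2) (n := 2)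
    (fun u _ => Finset.mem_range.2 (Nat.mod_lt _ two_pos)) (by simpa using hcard)
  obtain ⟨a, ha, b, hb, c, hc, hab, hac, hbc⟩ := Finset.two_lt_card.1 hp
  simp only [Finset.mem_filter] at ha hb hc
  have four_le {x y : Fin 5 → Bool} (hx : x ∈ s ∧ hammingDist x z % 2 = p)
      (hy : y ∈ s ∧ hammingDist y z % 2 = p) (hxy : x ≠ y) : 4 ≤ hammingDist x y := by
    have h3 := three_le_hammingDist_of_isIndep hs hx.1 hy.1 hxy
    have heven := even_hammingDist_of_mod_two_eq z (hx.2.trans hy.2.symm)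
    rw [Nat.even_iff] at heven
    omega
  have hsum := hammingDist_add_hammingDist_add_hammingDist_le_s3 a b c
  have hab4 := four_le ha hb hab
  have hbc4 := four_le hb hc hbc
  have hac4 := four_le ha hc hac
  simp only [Fintype.card_fin] at hsum
  omega
end

section
/- Let G be the graph on {0,1}^5 where distinct u, v are adjacent iff 1 ≤ d_H(u,v) ≤ 2, and let G ⊠ G denote the strong product of G with itself. Then the 20-element set consisting of the pairs ((1,1,0,0,0),(1,1,1,1,1)), ((1,0,1,0,0),(1,1,0,0,0)), ((0,1,1,0,0),(0,0,1,1,0)), ((1,1,1,0,0),(0,0,0,0,1)), ((1,0,0,1,0),(0,0,1,0,1)), ((0,1,0,1,0),(1,0,0,0,0)), ((1,1,0,1,0),(0,1,0,1,0)), ((0,0,1,1,0),(0,1,0,1,1)), ((1,0,1,1,0),(1,0,1,1,0)), ((0,1,1,1,0),(1,1,1,0,1)), ((1,0,0,0,1),(0,0,0,1,0)), ((0,1,0,0,1),(0,1,0,0,1)), ((1,1,0,0,1),(1,0,1,0,0)), ((0,0,1,0,1),(1,0,1,0,1)), ((1,0,1,0,1),(0,1,1,1,1)), ((0,1,1,0,1),(1,1,0,1,0)),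 ((0,0,0,1,1),(1,1,1,1,0)), ((1,0,0,1,1),(1,1,0,0,1)), ((0,1,0,1,1),(0,0,1,1,1)), ((0,0,1,1,1),(0,0,0,0,0)) is an independent set in G ⊠ G. -/
open SimpleGraph

/-- The strong product of two simple graphs. -/
def strongProd {V W : Type*} (G : SimpleGraph V) (H : SimpleGraph W) : SimpleGraph (V × W) where
  Adj a b := a ≠ b ∧ (a.1 = b.1 ∨ G.Adj a.1 b.1) ∧ (a.2 = b.2 ∨ H.Adj a.2 b.2)
  symm := ⟨fun a b h => ⟨fun e => h.1 e.symm, (h.2.1).imp Eq.symm (fun hadj => G.adj_symm hadj),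
    (h.2.2).imp Eq.symm (fun hadj => H.adj_symm hadj)⟩⟩
  loopless := ⟨fun a h => h.1 rfl⟩

/-!
In `gilbert`, `u = v ∨ u ~ v` holds exactly when `d_H(u, v) ≤ 2`. Hence two distinct vertices of
`gilbert ⊠ gilbert` are non-adjacent iff one of their coordinates is at Hamming distance at least 3,
and independence of the given set is a finite check of that condition on its 190 pairs.
-/

lemma isIndep_strongProd_iff {V W : Type*} {G : SimpleGraph V} {H : SimpleGraph W}
    {s : Set (V × W)} :
    IsIndep (strongProd G H) s ↔ s.Pairwise fun a b =>
      ¬(a.1 = b.1 ∨ G.Adj a.1 b.1) ∨ ¬(a.2 = b.2 ∨ H.Adj a.2 b.2) := by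
  refine forall₄_congr fun _ _ _ _ => imp_congr_right fun hab => ?_
  simp only [strongProd, ne_eq, hab, not_false_eq_true, true_and, not_and_or]

lemma gilbert_eq_or_adj_iff {u v : Fin 5 → Bool} :
    u = v ∨ gilbert.Adj u v ↔ hammingDist u v ≤ 2 := by
  rw [gilbert, ← hammingDist_eq_zero]
  omega

lemma isIndep_strongProd_gilbert_iff {s : Set ((Fin 5 → Bool) × (Fin 5 → Bool))} :
    IsIndep (strongProd gilbert gilbert) s ↔
      s.Pairwise fun a b => 3 ≤ hammingDist a.1 b.1 ∨ 3 ≤ hammingDist a.2 b.2 := by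
  simp only [isIndep_strongProd_iff, gilbert_eq_or_adj_iff, not_le, Nat.lt_iff_add_one_le]

theorem stmt5 : IsIndep (strongProd gilbert gilbert)
    {(![true, true, false, false, false], ![true, true, true, true, true]),
      (![true, false, true, false, false], ![true, true, false, false, false]),
      (![false, true, true, false, false], ![false, false, true, true, false]),
      (![true, true, true, false, false], ![false, false, false, false, true]),
      (![true, false, false, true, false], ![false, false, true, false, true]),
      (![false, true, false, true, false], ![true, false, false, false, false]),
      (![true, true, false, true, false], ![false, true, false, true, false]),
      (![false, false, true, true, false], ![false, true, false, true, true]),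
      (![true, false, true, true, false], ![true, false, true, true, false]),
      (![false, true, true, true, false], ![true, true, true, false, true]),
      (![true, false, false, false, true], ![false, false, false, true, false]),
      (![false, true, false, false, true], ![false, true, false, false, true]),
      (![true, true, false, false, true], ![true, false, true, false, false]),
      (![false, false, true, false, true], ![true, false, true, false, true]),
      (![true, false, true, false, true], ![false, true, true, true, true]),
      (![false, true, true, false, true], ![true, true, false, true, false]),
      (![false, false, false, true, true], ![true, true, true, true, false]),
      (![true, false, false, true, true], ![true, true, false, false, true]),
      (![false, true, false, true, true], ![false, false, true, true, true]),
      (![false, false, true, true, true], ![false, false, false, false, false])} := by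
  rw [isIndep_strongProd_gilbert_iff]
  -- `Set.Pairwise` is decidable only on a coerced `Finset`
  simp only [← Finset.coe_singleton, ← Finset.coe_insert]
  decide
end

section
/- Let A be the 32×32 adjacency matrix of the graph G on {0,1}^5 where distinct u, v are adjacent iff 1 ≤ d_H(u,v) ≤ 2 (vertices ordered by the decimal value of their binary labels). Then the smallest eigenvalue of A equals -3. -/
/-! Let `A₁` be the adjacency matrix of the 5-cube and `B = A₁ + 1`. Since `A₁² = 5 + 2A₂`, where
`A₂` records Hamming distance 2, we get `B² = 2A + 6`; so `A + 3 = BᵀB / 2` is positive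
semidefinite and every eigenvalue of `A` is at least `-3`. The Walsh character `χ_S` of a
3-element set `S` is an eigenvector of `A₁` with eigenvalue `5 - 2|S| = -1`, hence `Bχ_S = 0`
and `Aχ_S = -3χ_S`. -/

open SimpleGraph

/-- The binary representation of `i ∈ {0, …, 31}` as a 5-tuple of bits. -/
def bits (i : Fin 32) : Fin 5 → Bool := fun k => Nat.testBit i.val k.val

/-- Hamming distance between the binary labels of two indices. -/
def hd (i j : Fin 32) : ℕ := hammingDist (bits i) (bits j)

/-- The adjacency matrix of the Gilbert graph, vertices in decimal order. -/
def adjMat : Matrix (Fin 32) (Fin 32) ℝ :=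
  fun i j => if 1 ≤ hd i j ∧ hd i j ≤ 2 then 1 else 0

/-- The explicit 32×32 symmetric matrix of the construction: entries equal `3`
on the antidiagonal (Hamming distance 5, i.e. `i + j = 33` with 1-based indexing),
`-1` on adjacent pairs (Hamming distance 1 or 2), and `+1` otherwise. -/
def Xmat : Matrix (Fin 32) (Fin 32) ℝ :=
  fun i j => if hd i j = 5 then 3 else if 1 ≤ hd i j ∧ hd i j ≤ 2 then -1 else 1

open Matrix Finset
open scoped ComplexOrder

theorem Matrix.IsHermitian.le_eigenvalues_of_posSemidef_sub {𝕜 n : Type*} [RCLike 𝕜]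
    [Fintype n] [DecidableEq n] {A : Matrix n n 𝕜} (hA : A.IsHermitian) {μ : ℝ}
    (h : (A - μ • (1 : Matrix n n 𝕜)).PosSemidef) (i : n) : μ ≤ hA.eigenvalues i := by
  have hmem : hA.eigenvalues i - μ ∈ spectrum ℝ (A - μ • (1 : Matrix n n 𝕜)) := by
    rw [← Algebra.algebraMap_eq_smul_one, ← spectrum.sub_singleton_eq]
    exact Set.sub_mem_sub (hA.eigenvalues_mem_spectrum_real i) rfl
  obtain ⟨j, hj⟩ := h.isHermitian.spectrum_real_eq_range_eigenvalues ▸ hmem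
  linarith [h.eigenvalues_nonneg j]

theorem Matrix.IsHermitian.mem_range_eigenvalues_of_mulVec_eq_smul {𝕜 n : Type*} [RCLike 𝕜]
    [Fintype n] [DecidableEq n] {A : Matrix n n 𝕜} (hA : A.IsHermitian) {μ : ℝ} {v : n → 𝕜}
    (hv : v ≠ 0) (hAv : A *ᵥ v = (μ : 𝕜) • v) : μ ∈ Set.range hA.eigenvalues := by
  rw [← hA.spectrum_real_eq_range_eigenvalues, ← spectrum.algebraMap_mem_iff 𝕜,
    ← spectrum_toLin', ← Module.End.hasEigenvalue_iff_mem_spectrum]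
  exact Module.End.hasEigenvalue_of_hasEigenvector
    ⟨Module.End.mem_eigenspace_iff.mpr (by simpa using hAv), hv⟩

lemma hd_comm (i j : Fin 32) : hd i j = hd j i := hammingDist_comm _ _

def cubeClosedAdj : Matrix (Fin 32) (Fin 32) ℝ := fun i j => if hd i j ≤ 1 then 1 else 0

lemma cubeClosedAdj_conjTranspose : cubeClosedAdjᴴ = cubeClosedAdj := by
  ext i j
  simp [cubeClosedAdj, hd_comm i j]

lemma card_common_closedNbhd (i j : Fin 32) :
    #{k | hd i k ≤ 1 ∧ hd k j ≤ 1} =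
      2 * (if 1 ≤ hd i j ∧ hd i j ≤ 2 then 1 else 0) + 6 * (if i = j then 1 else 0) := by
  revert i j; decide

lemma cubeClosedAdj_mul_self :
    cubeClosedAdj * cubeClosedAdj = (2 : ℝ) • adjMat + (6 : ℝ) • 1 := by
  ext i j
  simp only [mul_apply, cubeClosedAdj, ite_zero_mul_ite_zero, mul_one, sum_boole,
    card_common_closedNbhd, Matrix.add_apply, Matrix.smul_apply, one_apply, adjMat, smul_eq_mul]
  push_cast
  split_ifs <;> norm_num

def walshChar (S : Finset (Fin 5)) (i : Fin 32) : ℤ := ∏ k ∈ S, if bits i k then -1 else 1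

lemma sum_walshChar_closedNbhd (i : Fin 32) :
    ∑ j with hd i j ≤ 1, walshChar {0, 1, 2} j = 0 := by
  revert i; decide

lemma cubeClosedAdj_mulVec_walshChar :
    cubeClosedAdj *ᵥ (fun i => (walshChar {0, 1, 2} i : ℝ)) = 0 := by
  funext i
  have := congrArg (Int.cast : ℤ → ℝ) (sum_walshChar_closedNbhd i)
  push_cast [sum_filter] at this
  simpa [mulVec, dotProduct, cubeClosedAdj] using this

lemma walshChar_ne_zero : (fun i => (walshChar {0, 1, 2} i : ℝ)) ≠ 0 := by
  intro h
  have h0 : walshChar {0, 1, 2} 0 = 1 := by decide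
  simpa [h0] using congrFun h 0

lemma adjMat_mulVec_walshChar :
    adjMat *ᵥ (fun i => (walshChar {0, 1, 2} i : ℝ)) =
      (-3 : ℝ) • fun i => (walshChar {0, 1, 2} i : ℝ) := by
  have h := congrArg (cubeClosedAdj *ᵥ ·) cubeClosedAdj_mulVec_walshChar
  simp only [mulVec_mulVec, cubeClosedAdj_mul_self, add_mulVec, smul_mulVec, one_mulVec,
    mulVec_zero] at h
  funext i
  have hi := congrFun h i
  simp only [Pi.add_apply, Pi.smul_apply, smul_eq_mul, Pi.zero_apply] at hi ⊢
  linarith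

lemma posSemidef_adjMat_sub_neg_three :
    (adjMat - (-3 : ℝ) • (1 : Matrix (Fin 32) (Fin 32) ℝ)).PosSemidef := by
  have h : adjMat - (-3 : ℝ) • 1 = (1 / 2 : ℝ) • (cubeClosedAdjᴴ * cubeClosedAdj) := by
    rw [cubeClosedAdj_conjTranspose, cubeClosedAdj_mul_self]
    module
  rw [h]
  exact (posSemidef_conjTranspose_mul_self _).smul (by norm_num)

theorem stmt12 (hA : adjMat.IsHermitian) :
    IsLeast (Set.range hA.eigenvalues) (-3) := by
  refine ⟨hA.mem_range_eigenvalues_of_mulVec_eq_smul walshChar_ne_zero ?_, ?_⟩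
  · simpa using adjMat_mulVec_walshChar
  · rintro _ ⟨i, rfl⟩
    exact hA.le_eigenvalues_of_posSemidef_sub posSemidef_adjMat_sub_neg_three i
end

section
/- Let G be a d-regular graph on n vertices with adjacency matrix A, let λ_n be the smallest eigenvalue of A, and suppose d > 0 and λ_n < 0. If S is an independent set of G, then |S| ≤ -n·λ_n/(d - λ_n). -/
open Matrix Finset
open scoped ComplexOrder

namespace Matrix

variable {n : Type*} [Fintype n]

theorem IsSymm.dotProduct_mulVec_sub {R : Type*} [CommRing R] {M : Matrix n n R} (hM : M.IsSymm)
    (a b : n → R) :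
    (a - b) ⬝ᵥ M *ᵥ (a - b) = a ⬝ᵥ M *ᵥ a - 2 * (a ⬝ᵥ M *ᵥ b) + b ⬝ᵥ M *ᵥ b := by
  have hba : b ⬝ᵥ M *ᵥ a = a ⬝ᵥ M *ᵥ b := by
    rw [dotProduct_mulVec, ← mulVec_transpose, hM.eq, dotProduct_comm]
  simp only [mulVec_sub, dotProduct_sub, sub_dotProduct, hba]
  ring

variable {𝕜 : Type*} [RCLike 𝕜] [DecidableEq n] {A : Matrix n n 𝕜}

theorem IsHermitian.posSemidef_sub_smul_one (hA : A.IsHermitian) {r : ℝ}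
    (hr : ∀ i, r ≤ hA.eigenvalues i) : (A - (r : 𝕜) • 1).PosSemidef := by
  rw [← Algebra.algebraMap_eq_smul_one, posSemidef_iff_isHermitian_and_spectrum_nonneg,
    ← spectrum.sub_singleton_eq, hA.spectrum_eq_image_range]
  refine ⟨hA.sub (IsSelfAdjoint.algebraMap _ (RCLike.conj_ofReal r)), ?_⟩
  rintro _ ⟨_, ⟨_, ⟨i, rfl⟩, rfl⟩, _, rfl, rfl⟩
  exact sub_nonneg.2 (RCLike.ofReal_le_ofReal.2 (hr i))

theorem IsHermitian.mul_dotProduct_le_dotProduct_mulVec (hA : A.IsHermitian) {r : ℝ}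
    (hr : ∀ i, r ≤ hA.eigenvalues i) (x : n → 𝕜) :
    (r : 𝕜) * (star x ⬝ᵥ x) ≤ star x ⬝ᵥ A *ᵥ x := by
  have := (hA.posSemidef_sub_smul_one hr).dotProduct_mulVec_nonneg x
  rwa [sub_mulVec, dotProduct_sub, smul_mulVec, one_mulVec, dotProduct_smul, smul_eq_mul,
    sub_nonneg] at this

end Matrix

namespace SimpleGraph

variable {V α : Type*} [Fintype V] {G : SimpleGraph V} [DecidableRel G.Adj]

theorem IsIndepSet.dotProduct_adjMatrix_mulVec_indicator [NonAssocSemiring α] {s : Set V}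
    (hs : G.IsIndepSet s) :
    s.indicator 1 ⬝ᵥ G.adjMatrix α *ᵥ s.indicator 1 = 0 := by
  rw [dotProduct_mulVec_adjMatrix]
  refine Finset.sum_eq_zero fun u _ => Finset.sum_eq_zero fun v _ => ?_
  split_ifs with huv
  · by_cases hu : u ∈ s
    · have hv : v ∉ s := fun hv => hs hu hv (G.ne_of_adj huv) huv
      simp [hv]
    · simp [hu]
  · rfl

theorem IsRegularOfDegree.adjMatrix_mulVec_one [NonAssocSemiring α] {d : ℕ}
    (hreg : G.IsRegularOfDegree d) : G.adjMatrix α *ᵥ 1 = (d : α) • 1 := by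
  ext v
  simp [hreg v]

theorem IsRegularOfDegree.card_mul_sub_le_of_isIndepSet {d : ℕ} (hreg : G.IsRegularOfDegree d)
    {lam : ℝ} (hlam : ∀ x : V → ℝ, lam * (x ⬝ᵥ x) ≤ x ⬝ᵥ G.adjMatrix ℝ *ᵥ x) (hlam0 : lam ≤ 0)
    {s : Finset V} (hs : G.IsIndepSet s) :
    (s.card : ℝ) * (d - lam) ≤ -lam * Fintype.card V := by
  set k := (s.card : ℝ)
  set N := (Fintype.card V : ℝ)
  set e : V → ℝ := (s : Set V).indicator 1
  have hee : e ⬝ᵥ e = k := by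
    simp [e, k, dotProduct, ← Set.indicator_mul, sum_indicator_subset _ (subset_univ s)]
  have he1 : e ⬝ᵥ 1 = k := by
    simp [e, k, dotProduct, sum_indicator_subset _ (subset_univ s)]
  have h11 : (1 : V → ℝ) ⬝ᵥ 1 = N := by simp [N]
  have heAe : e ⬝ᵥ G.adjMatrix ℝ *ᵥ e = 0 := hs.dotProduct_adjMatrix_mulVec_indicator
  set x := N • e - k • (1 : V → ℝ)
  have hxx : x ⬝ᵥ x = N * k * (N - k) := by
    simp only [x, dotProduct_sub, sub_dotProduct, dotProduct_smul, smul_dotProduct, smul_eq_mul,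
      hee, he1, dotProduct_comm 1 e, h11]
    ring
  have hxAx : x ⬝ᵥ G.adjMatrix ℝ *ᵥ x = -(N * k ^ 2 * d) := by
    rw [G.isSymm_adjMatrix.dotProduct_mulVec_sub]
    simp only [mulVec_smul, dotProduct_smul, smul_dotProduct, smul_eq_mul,
      hreg.adjMatrix_mulVec_one, heAe, he1, h11]
    ring
  have hbound := hlam x
  rw [hxx, hxAx] at hbound
  obtain hk | hk := (show 0 ≤ k by positivity).eq_or_lt
  · rw [← hk, zero_mul]
    exact mul_nonneg (neg_nonneg.2 hlam0) (by positivity)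
  · have hkN : k ≤ N := by simp only [k, N]; exact_mod_cast card_le_univ s
    have hfactor : N * k * (k * (d - lam) - -lam * N) ≤ 0 := by linear_combination hbound
    exact sub_nonpos.1 (nonpos_of_mul_nonpos_right hfactor (mul_pos (hk.trans_le hkN) hk))

end SimpleGraph

theorem stmt13_general {V : Type*} [Fintype V] [DecidableEq V] (G : SimpleGraph V)
    [DecidableRel G.Adj] (d n : ℕ) (hn : Fintype.card V = n)
    (hreg : G.IsRegularOfDegree d)
    (hA : (SimpleGraph.adjMatrix ℝ G).IsHermitian) (lam : ℝ)
    (hlam : IsLeast (Set.range hA.eigenvalues) lam) (hneg : lam < 0)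
    (s : Finset V) (hs : IsIndep G ↑s) :
    (s.card : ℝ) ≤ -(n : ℝ) * lam / ((d : ℝ) - lam) := by
  have hrayleigh (x : V → ℝ) : lam * (x ⬝ᵥ x) ≤ x ⬝ᵥ G.adjMatrix ℝ *ᵥ x := by
    simpa using hA.mul_dotProduct_le_dotProduct_mulVec (fun i => hlam.2 ⟨i, rfl⟩) x
  have hbound := hreg.card_mul_sub_le_of_isIndepSet hrayleigh hneg.le hs
  rw [le_div_iff₀ (by linarith [(Nat.cast_nonneg d : (0 : ℝ) ≤ d)]), ← hn]
  linarith

theorem stmt13 {V : Type*} [Fintype V] [DecidableEq V] (G : SimpleGraph V)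
    [DecidableRel G.Adj] (d n : ℕ) (hn : Fintype.card V = n)
    (hreg : G.IsRegularOfDegree d) (hd : 0 < d)
    (hA : (SimpleGraph.adjMatrix ℝ G).IsHermitian) (lam : ℝ)
    (hlam : IsLeast (Set.range hA.eigenvalues) lam) (hneg : lam < 0)
    (s : Finset V) (hs : IsIndep G ↑s) :
    (s.card : ℝ) ≤ -(n : ℝ) * lam / ((d : ℝ) - lam) :=
  stmt13_general G d n hn hreg hA lam hlam hneg s hs
end

section
/- Let X be the 32×32 real symmetric matrix whose diagonal entries are 1, whose antidiagonal entries X_{i,j} with i + j = 33 equal 3, and whose other entries are ±1 as specified by the explicit matrix [X_l, X_r] from the construction (all entries of X belong to {-1, +1, +3}, with X_{i,j} = 3 iff i + j = 33). Then the largest eigenvalue of X equals 4. -/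
open SimpleGraph

/-!
`X` satisfies `X² + 8X = 48`, i.e. `(X - 4)(X + 12) = 0`, so every eigenvalue of `X` is `4` or
`-12`. As `trace X = 32 ≠ 32 · (-12)`, not all eigenvalues are `-12`, so `4` occurs and is the
largest.
-/

open Matrix

theorem Matrix.IsHermitian.eigenvalues_eq_or_eq_of_mul_eq_zero {n 𝕜 : Type*} [Fintype n]
    [DecidableEq n] [RCLike 𝕜] {A : Matrix n n 𝕜} (hA : A.IsHermitian) {a b : ℝ}
    (h : (A - a • 1) * (A - b • 1) = 0) (i : n) :
    hA.eigenvalues i = a ∨ hA.eigenvalues i = b := by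
  set μ := hA.eigenvalues i
  set v := ⇑(hA.eigenvectorBasis i)
  have hv : v ≠ 0 := fun h0 =>
    hA.eigenvectorBasis.orthonormal.ne_zero i (WithLp.ofLp_injective 2 h0)
  have hroot : ((μ - a) * (μ - b)) • v = 0 := by
    calc ((μ - a) * (μ - b)) • v = ((A - a • 1) * (A - b • 1)) *ᵥ v := by
          simp only [← mulVec_mulVec, sub_mulVec, smul_mulVec, one_mulVec,
            hA.mulVec_eigenvectorBasis i, mulVec_sub, mulVec_smul, v, μ]
          module
      _ = 0 := by rw [h, zero_mulVec]
  have hμ := (smul_eq_zero.mp hroot).resolve_right hv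
  rcases mul_eq_zero.mp hμ with hμa | hμb
  · exact .inl (sub_eq_zero.mp hμa)
  · exact .inr (sub_eq_zero.mp hμb)

theorem isGreatest_range_of_forall_eq_or_eq {ι : Type*} [Fintype ι] {f : ι → ℝ} {a b : ℝ}
    (hf : ∀ i, f i = a ∨ f i = b) (hba : b ≤ a) (hsum : ∑ i, f i ≠ Fintype.card ι * b) :
    IsGreatest (Set.range f) a := by
  refine ⟨?_, ?_⟩
  · by_contra ha
    refine hsum ?_
    have hb : ∀ i, f i = b := fun i => (hf i).resolve_left fun h => ha ⟨i, h⟩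
    simp [hb]
  · rintro _ ⟨i, rfl⟩
    rcases hf i with hfa | hfb
    · exact hfa.le
    · exact hfb ▸ hba

/-- `Xmat` over `ℤ`, where its quadratic relation can be checked by `decide`. -/
def Xint : Matrix (Fin 32) (Fin 32) ℤ :=
  fun i j => if hd i j = 5 then 3 else if 1 ≤ hd i j ∧ hd i j ≤ 2 then -1 else 1

theorem Xint_sub_four_mul_add_twelve : (Xint - 4) * (Xint + 12) = 0 := by
  decide

theorem Xmat_eq_map_Xint : Xmat = (Int.castRingHom ℝ).mapMatrix Xint := by
  ext i j
  simp only [Xmat, Xint, RingHom.mapMatrix_apply, map_apply]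
  split_ifs <;> norm_num

theorem Xmat_sub_four_mul_add_twelve : (Xmat - (4 : ℝ) • 1) * (Xmat - (-12 : ℝ) • 1) = 0 := by
  have := congrArg (Int.castRingHom ℝ).mapMatrix Xint_sub_four_mul_add_twelve
  rw [map_mul, map_sub, map_add, map_ofNat, map_ofNat, map_zero, ← Xmat_eq_map_Xint] at this
  rw [← this]
  simp only [neg_smul, sub_neg_eq_add, ofNat_smul_eq_nsmul, nsmul_eq_mul, Nat.cast_ofNat, mul_one]

theorem trace_Xmat : Xmat.trace = 32 := by
  have hdiag (i : Fin 32) : Xmat i i = 1 := by simp [Xmat, hd]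
  simp [trace, hdiag]

theorem stmt15 (hX : Xmat.IsHermitian) :
    IsGreatest (Set.range hX.eigenvalues) 4 := by
  have hsum : ∑ i, hX.eigenvalues i = 32 := by
    exact_mod_cast hX.trace_eq_sum_eigenvalues.symm.trans trace_Xmat
  refine isGreatest_range_of_forall_eq_or_eq
    (hX.eigenvalues_eq_or_eq_of_mul_eq_zero Xmat_sub_four_mul_add_twelve) (by norm_num) ?_
  rw [hsum]
  norm_num
end
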